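/- arXiv:1705.08381 — 2 statements merged into one kernel-verified Lean document; each statement's English description precedes it below -/
import Mathlib

section
/- For the three-dimensional exponentiated Hencky energy, the limiting value of χ at equal stretches λ_l = λ_k is μ·exp(k·Σⱼ(log λ̄ⱼ)²) - τ_k, where τ_k = 2μ·exp(k·Σⱼ(log λ̄ⱼ)²)·log λ̄_k + κ·exp(k̂·(Σⱼ log λⱼ)²)·Σⱼ log λⱼ and λ̄ⱼ = λⱼ/(λ₁λ₂λ₃)^{1/3}. -/
/-!
In the logarithmic stretches `z`, the gradient of the energy is
`2μ e^{k‖dev z‖²} dev z + κ e^{k̂ (tr z)²} (tr z) 𝟙`, and its Hessian `H` is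
`2μ e^{k‖dev z‖²} (P + 2k dev z ⊗ dev z) + κ e^{k̂ (tr z)²} (1 + 2k̂ (tr z)²) 𝟙 ⊗ 𝟙`,
where `P = I - 𝟙 ⊗ 𝟙 / n` is the orthogonal projection onto trace-free vectors. If `z_a = z_b`
then `(dev z)_a = (dev z)_b`, so the rank-one terms contribute equally to `H_aa` and `H_ab`, and
`H_aa - H_ab = 2μ e^{k‖dev z‖²} (P_aa - P_ab) = 2μ e^{k‖dev z‖²}`; moreover `∂_b W = ∂_a W = τ_a`.
-/

open Real Finset ContinuousLinearMap

namespace ExpHencky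

variable {n : ℕ}

def tr : (Fin n → ℝ) →L[ℝ] ℝ := ∑ m, proj m

noncomputable def dev : (Fin n → ℝ) →L[ℝ] Fin n → ℝ :=
  .id ℝ _ - tr.smulRight fun _ => (n : ℝ)⁻¹

def dotL (u : Fin n → ℝ) : (Fin n → ℝ) →L[ℝ] ℝ := ∑ i, u i • proj i

@[simp] lemma tr_apply (z : Fin n → ℝ) : tr z = ∑ m, z m := by
  simp [tr]

lemma dev_apply (z : Fin n → ℝ) (i : Fin n) : dev z i = z i - tr z / n := by
  simp [dev, div_eq_mul_inv]

@[simp] lemma dotL_apply (u w : Fin n → ℝ) : dotL u w = u ⬝ᵥ w := by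
  simp [dotL, dotProduct]

lemma tr_dev (z : Fin n → ℝ) : tr (dev z) = 0 := by
  rcases eq_or_ne n 0 with rfl | hn
  · simp
  · rw [tr_apply]
    simp only [dev_apply, sum_sub_distrib, sum_const, card_univ, Fintype.card_fin, nsmul_eq_mul]
    field_simp
    simp

lemma dotProduct_dev_eq (y v : Fin n → ℝ) : dev y ⬝ᵥ dev v = dev y ⬝ᵥ v := by
  simp only [dotProduct, dev_apply v, mul_sub, sum_sub_distrib, ← sum_mul, ← tr_apply, tr_dev,
    zero_mul, sub_zero]

lemma dev_dotProduct_comm (y v : Fin n → ℝ) : dev y ⬝ᵥ v = dev v ⬝ᵥ y := by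
  rw [← dotProduct_dev_eq, dotProduct_comm, dotProduct_dev_eq]

lemma hasFDerivAt_dev_dotProduct_dev (y : Fin n → ℝ) :
    HasFDerivAt (fun z => dev z ⬝ᵥ dev z) ((2 : ℝ) • dotL (dev y)) y := by
  have hcoord (i : Fin n) : HasFDerivAt (fun z => dev z i) (proj i ∘L dev) y :=
    (proj i ∘L dev).hasFDerivAt
  refine (HasFDerivAt.fun_sum (u := univ) fun i _ => (hcoord i).mul (hcoord i)).congr_fderiv ?_
  ext w
  rw [smul_apply, dotL_apply, ← dotProduct_dev_eq]
  simp only [_root_.sum_apply, add_apply, smul_apply, comp_apply, proj_apply, smul_eq_mul,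
    dotProduct, mul_sum]
  exact sum_congr rfl fun i _ => by ring

variable (μ κ k khat : ℝ)

/-- In terms of the logarithmic stretches `z i = log λᵢ`: `dev z i = log λ̄ᵢ`, `tr z = log det F`. -/
noncomputable def energy (z : Fin n → ℝ) : ℝ :=
  μ / k * exp (k * (dev z ⬝ᵥ dev z)) + κ / (2 * khat) * exp (khat * tr z ^ 2)

noncomputable def chi (W : (Fin n → ℝ) → ℝ) (a b : Fin n) (y : Fin n → ℝ) : ℝ :=
  1 / 2 * (fderiv ℝ (fun z => fderiv ℝ W z (Pi.single a 1)) y (Pi.single a 1)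
      - fderiv ℝ (fun z => fderiv ℝ W z (Pi.single a 1)) y (Pi.single b 1))
    - fderiv ℝ W y (Pi.single b 1)

variable {μ κ k khat}

lemma hasFDerivAt_energy (hk : k ≠ 0) (hkhat : khat ≠ 0) (y : Fin n → ℝ) :
    HasFDerivAt (energy μ κ k khat)
      ((2 * μ * exp (k * (dev y ⬝ᵥ dev y))) • dotL (dev y)
        + (κ * exp (khat * tr y ^ 2) * tr y) • tr) y := by
  have hdev := ((hasFDerivAt_dev_dotProduct_dev y).const_mul k).exp.const_mul (μ / k)
  have htr := ((tr.hasFDerivAt (x := y)).pow 2 |>.const_mul khat).exp.const_mul (κ / (2 * khat))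
  refine (hdev.add htr).congr_fderiv ?_
  ext w
  simp
  field_simp

lemma fderiv_energy_apply (hk : k ≠ 0) (hkhat : khat ≠ 0) (y v : Fin n → ℝ) :
    fderiv ℝ (energy μ κ k khat) y v =
      2 * μ * exp (k * (dev y ⬝ᵥ dev y)) * (dev y ⬝ᵥ v)
        + κ * exp (khat * tr y ^ 2) * tr y * tr v := by
  simp [(hasFDerivAt_energy hk hkhat y).fderiv]

lemma fderiv_fderiv_energy_apply (hk : k ≠ 0) (hkhat : khat ≠ 0) (y v w : Fin n → ℝ) :
    fderiv ℝ (fun z => fderiv ℝ (energy μ κ k khat) z v) y w =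
      2 * μ * exp (k * (dev y ⬝ᵥ dev y)) * (2 * k * (dev y ⬝ᵥ v) * (dev y ⬝ᵥ w) + dev v ⬝ᵥ w)
        + κ * exp (khat * tr y ^ 2) * (2 * khat * tr y ^ 2 + 1) * tr v * tr w := by
  have hgrad : (fun z => fderiv ℝ (energy μ κ k khat) z v) = fun z =>
      2 * μ * exp (k * (dev z ⬝ᵥ dev z)) * dotL (dev v) z
        + κ * exp (khat * tr z ^ 2) * tr z * tr v := by
    funext z
    rw [fderiv_energy_apply hk hkhat, dotL_apply, dev_dotProduct_comm z v]
  have hdev := ((hasFDerivAt_dev_dotProduct_dev y).const_mul k).exp.const_mul (2 * μ)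
  have htr := ((tr.hasFDerivAt (x := y)).pow 2 |>.const_mul khat).exp.const_mul κ
  rw [hgrad, ((hdev.fun_mul (dotL (dev v)).hasFDerivAt).fun_add
    ((htr.fun_mul tr.hasFDerivAt).mul_const (tr v))).fderiv]
  simp [dev_dotProduct_comm v]
  ring

theorem chi_energy_of_apply_eq (hk : k ≠ 0) (hkhat : khat ≠ 0) {a b : Fin n} (hab : a ≠ b)
    {y : Fin n → ℝ} (hy : y b = y a) :
    chi (energy μ κ k khat) a b y =
      μ * exp (k * (dev y ⬝ᵥ dev y))
        - (2 * μ * exp (k * (dev y ⬝ᵥ dev y)) * dev y a + κ * exp (khat * tr y ^ 2) * tr y) := by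
  have hdev : dev y b = dev y a := by rw [dev_apply, dev_apply, hy]
  rw [chi, fderiv_fderiv_energy_apply hk hkhat, fderiv_fderiv_energy_apply hk hkhat,
    fderiv_energy_apply hk hkhat]
  simp [dotProduct_single, dev_apply, hab.symm, hdev]
  ring

lemma energy_fin_three : (energy μ κ k khat : (Fin 3 → ℝ) → ℝ) = fun z =>
    μ / k * exp (k * ∑ i, (z i - (∑ m, z m) / 3) ^ 2)
      + κ / (2 * khat) * exp (khat * (∑ m, z m) ^ 2) := by
  funext z
  simp [energy, dotProduct, dev_apply, sq]

end ExpHencky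

theorem expHencky_chi_equal_stretches_general (μ κ k khat : ℝ)
    (hk : 0 < k) (hkhat : 0 < khat)
    (kk ll : Fin 3) (hkl : kk ≠ ll) (lam : Fin 3 → ℝ)
    (heq : lam ll = lam kk) :
    (1 / 2) *
        ((fderiv ℝ (fun y : Fin 3 → ℝ =>
            fderiv ℝ (fun z : Fin 3 → ℝ =>
                μ / k * Real.exp (k * ∑ i, (z i - (∑ m, z m) / 3) ^ 2)
                + κ / (2 * khat) * Real.exp (khat * (∑ m, z m) ^ 2)) y (Pi.single kk 1))
            (fun i => Real.log (lam i)) (Pi.single kk 1))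
          - (fderiv ℝ (fun y : Fin 3 → ℝ =>
            fderiv ℝ (fun z : Fin 3 → ℝ =>
                μ / k * Real.exp (k * ∑ i, (z i - (∑ m, z m) / 3) ^ 2)
                + κ / (2 * khat) * Real.exp (khat * (∑ m, z m) ^ 2)) y (Pi.single kk 1))
            (fun i => Real.log (lam i)) (Pi.single ll 1)))
      - fderiv ℝ (fun z : Fin 3 → ℝ =>
            μ / k * Real.exp (k * ∑ i, (z i - (∑ m, z m) / 3) ^ 2)
            + κ / (2 * khat) * Real.exp (khat * (∑ m, z m) ^ 2))
          (fun i => Real.log (lam i)) (Pi.single ll 1) =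
    μ * Real.exp (k * ∑ j, (Real.log (lam j) - (∑ i, Real.log (lam i)) / 3) ^ 2)
      - (2 * μ * Real.exp (k * ∑ j, (Real.log (lam j) - (∑ i, Real.log (lam i)) / 3) ^ 2)
            * (Real.log (lam kk) - (∑ i, Real.log (lam i)) / 3)
          + κ * Real.exp (khat * (∑ j, Real.log (lam j)) ^ 2) * ∑ j, Real.log (lam j)) := by
  rw [← ExpHencky.energy_fin_three]
  have hchi := ExpHencky.chi_energy_of_apply_eq (μ := μ) (κ := κ) hk.ne' hkhat.ne' hkl
    (y := fun i => Real.log (lam i)) (congrArg Real.log heq)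
  simpa [ExpHencky.chi, ExpHencky.dev_apply, dotProduct, sq] using hchi

/-- For the three-dimensional exponentiated Hencky energy
`W_eH(x₁,x₂,x₃) = (μ/k)·exp(k·∑ᵢ(xᵢ - s/3)²) + (κ/(2k̂))·exp(k̂·s²)` in the principal
logarithmic stretches `xᵢ = log λᵢ`, the limiting value of `χ`, i.e.
`½(∂²W/∂x_k² - ∂²W/∂x_k∂x_l) - ∂W/∂x_l` evaluated at equal stretches `λ_l = λ_k`, equals
`μ·exp(k·∑ⱼ(log λ̄ⱼ)²) - τ_k`, where
`τ_k = 2μ·exp(k·∑ⱼ(log λ̄ⱼ)²)·log λ̄_k + κ·exp(k̂·(∑ⱼ log λⱼ)²)·∑ⱼ log λⱼ` and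
`log λ̄ⱼ = log λⱼ - (∑ᵢ log λᵢ)/3`. -/
theorem expHencky_chi_equal_stretches (μ κ k khat : ℝ) (hμ : 0 < μ) (hκ : 0 < κ)
    (hk : 0 < k) (hkhat : 0 < khat)
    (kk ll : Fin 3) (hkl : kk ≠ ll) (lam : Fin 3 → ℝ) (hpos : ∀ i, 0 < lam i)
    (heq : lam ll = lam kk) :
    (1 / 2) *
        ((fderiv ℝ (fun y : Fin 3 → ℝ =>
            fderiv ℝ (fun z : Fin 3 → ℝ =>
                μ / k * Real.exp (k * ∑ i, (z i - (∑ m, z m) / 3) ^ 2)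
                + κ / (2 * khat) * Real.exp (khat * (∑ m, z m) ^ 2)) y (Pi.single kk 1))
            (fun i => Real.log (lam i)) (Pi.single kk 1))
          - (fderiv ℝ (fun y : Fin 3 → ℝ =>
            fderiv ℝ (fun z : Fin 3 → ℝ =>
                μ / k * Real.exp (k * ∑ i, (z i - (∑ m, z m) / 3) ^ 2)
                + κ / (2 * khat) * Real.exp (khat * (∑ m, z m) ^ 2)) y (Pi.single kk 1))
            (fun i => Real.log (lam i)) (Pi.single ll 1)))
      - fderiv ℝ (fun z : Fin 3 → ℝ =>
            μ / k * Real.exp (k * ∑ i, (z i - (∑ m, z m) / 3) ^ 2)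
            + κ / (2 * khat) * Real.exp (khat * (∑ m, z m) ^ 2))
          (fun i => Real.log (lam i)) (Pi.single ll 1) =
    μ * Real.exp (k * ∑ j, (Real.log (lam j) - (∑ i, Real.log (lam i)) / 3) ^ 2)
      - (2 * μ * Real.exp (k * ∑ j, (Real.log (lam j) - (∑ i, Real.log (lam i)) / 3) ^ 2)
            * (Real.log (lam kk) - (∑ i, Real.log (lam i)) / 3)
          + κ * Real.exp (khat * (∑ j, Real.log (lam j)) ^ 2) * ∑ j, Real.log (lam j)) :=
  expHencky_chi_equal_stretches_general μ κ k khat hk hkhat kk ll hkl lam heq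
end

section
/- For an incompressible uniaxial deformation F = diag(λ, λ^{-1/2}, λ^{-1/2}) of the exponentiated Hencky material, imposing the stress boundary conditions S₁² = S₁³ = 0 yields the axial nominal stress S₁¹ = 3μ·exp((3/2)·k·(log λ)²)·(log λ)/λ. -/
/-! With `E = exp(k·Σⱼ(log λⱼ)²) = exp((3/2)·k·(log λ)²)`, the lateral condition `S₁² = 0` forces
`p = 2μE·log λ₂ = -μE·log λ`; substituted into `S₁¹` the pressure adds half of the deviatoric
part `2μE·log λ/λ`, giving the factor `3μE`. -/

open Real

theorem pressure_eq_of_principal_stress_eq_zero {p c x : ℝ} (hx : x ≠ 0)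
    (h : -p / x + c * log x / x = 0) : p = c * log x := by
  field_simp at h
  linarith

theorem log_rpow_neg_half {x : ℝ} (hx : 0 < x) :
    log (x ^ (-(1 : ℝ) / 2)) = -(1 / 2) * log x := by
  rw [log_rpow hx]
  ring

theorem sum_sq_log_uniaxial {lam : Fin 3 → ℝ} {x : ℝ} (hx : 0 < x) (h0 : lam 0 = x)
    (h1 : lam 1 = x ^ (-(1 : ℝ) / 2)) (h2 : lam 2 = x ^ (-(1 : ℝ) / 2)) :
    ∑ j, log (lam j) ^ 2 = 3 / 2 * log x ^ 2 := by
  rw [Fin.sum_univ_three, h0, h1, h2, log_rpow_neg_half hx]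
  ring

theorem expHencky_uniaxial_incompressible_general (μ k : ℝ)
    (lam : Fin 3 → ℝ) (lambda p : ℝ) (hlam : 0 < lambda)
    (h0 : lam 0 = lambda) (h1 : lam 1 = lambda ^ (-(1 : ℝ) / 2))
    (h2 : lam 2 = lambda ^ (-(1 : ℝ) / 2))
    (S : Fin 3 → ℝ)
    (hS : ∀ i, S i = -p / lam i
        + 2 * μ * Real.exp (k * ∑ j, (Real.log (lam j)) ^ 2) * Real.log (lam i) / lam i)
    (hlat1 : S 1 = 0) :
    S 0 = 3 * μ * Real.exp ((3 / 2) * k * (Real.log lambda) ^ 2)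
        * Real.log lambda / lambda := by
  have hE : exp (k * ∑ j, log (lam j) ^ 2) = exp (3 / 2 * k * log lambda ^ 2) := by
    rw [sum_sq_log_uniaxial hlam h0 h1 h2, mul_left_comm, mul_assoc]
  simp only [hE] at hS
  have hp : p = 2 * μ * exp (3 / 2 * k * log lambda ^ 2) * (-(1 / 2) * log lambda) := by
    have hlam1 : lam 1 ≠ 0 := by rw [h1]; positivity
    rw [← log_rpow_neg_half hlam, ← h1]
    exact pressure_eq_of_principal_stress_eq_zero hlam1 (hS 1 ▸ hlat1)
  rw [hS 0, h0, hp]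
  field_simp
  ring

/-- For an incompressible uniaxial deformation `F = diag(λ, λ^{-1/2}, λ^{-1/2})` of the
exponentiated Hencky material, with principal first Piola-Kirchhoff stresses
`S₁ⁱ = -p/λᵢ + 2μ·exp(k·∑ⱼ(log λⱼ)²)·(log λᵢ)/λᵢ` (`p` the hydrostatic pressure),
imposing the lateral stress boundary conditions `S₁² = S₁³ = 0` yields the axial
nominal stress `S₁¹ = 3μ·exp((3/2)·k·(log λ)²)·(log λ)/λ`. -/
theorem expHencky_uniaxial_incompressible (μ k : ℝ) (hμ : 0 < μ) (hk : 0 < k)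
    (lam : Fin 3 → ℝ) (lambda p : ℝ) (hlam : 0 < lambda)
    (h0 : lam 0 = lambda) (h1 : lam 1 = lambda ^ (-(1 : ℝ) / 2))
    (h2 : lam 2 = lambda ^ (-(1 : ℝ) / 2))
    (S : Fin 3 → ℝ)
    (hS : ∀ i, S i = -p / lam i
        + 2 * μ * Real.exp (k * ∑ j, (Real.log (lam j)) ^ 2) * Real.log (lam i) / lam i)
    (hlat1 : S 1 = 0) (hlat2 : S 2 = 0) :
    S 0 = 3 * μ * Real.exp ((3 / 2) * k * (Real.log lambda) ^ 2)
        * Real.log lambda / lambda :=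
  expHencky_uniaxial_incompressible_general μ k lam lambda p hlam h0 h1 h2 S hS hlat1
end
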